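/- arXiv:2104.09211 — 6 statements merged into one kernel-verified Lean document; each statement's English description precedes it below -/
import Mathlib

section
/- Let q ∈ (0, 1/4) and let α₁ < α₂ < α₃ be the three real roots of f(t) = t³ + (3/2)t² + (9/16)t + q², satisfying -1 < α₁ < -3/4 < α₂ < -1/4 < α₃ ≤ 0. Then it is impossible that √(-α₁) + √(-α₂) = 1 + √(-α₃). -/
set_option maxHeartbeats 800000


theorem stmt3 (q a1 a2 a3 : ℝ) (hq : 0 < q) (hq4 : q < 1/4)
    (h1 : a1^3 + (3/2)*a1^2 + (9/16)*a1 + q^2 = 0)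
    (h2 : a2^3 + (3/2)*a2^2 + (9/16)*a2 + q^2 = 0)
    (h3 : a3^3 + (3/2)*a3^2 + (9/16)*a3 + q^2 = 0)
    (h12 : a1 < a2) (h23 : a2 < a3)
    (hb1 : -1 < a1) (hb2 : a1 < -(3/4)) (hb3 : -(3/4) < a2) (hb4 : a2 < -(1/4))
    (hb5 : -(1/4) < a3) (hb6 : a3 ≤ 0) :
    ¬ (Real.sqrt (-a1) + Real.sqrt (-a2) = 1 + Real.sqrt (-a3)) := by
  intro H
  have hne12 : a1 - a2 ≠ 0 := sub_ne_zero.mpr (ne_of_lt h12)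
  have hne13 : a1 - a3 ≠ 0 := sub_ne_zero.mpr (ne_of_lt (h12.trans h23))
  have hne23 : a2 - a3 ≠ 0 := sub_ne_zero.mpr (ne_of_lt h23)
  have E12 : a1^2 + a1*a2 + a2^2 + (3/2)*(a1+a2) + 9/16 = 0 := by
    have h : (a1 - a2) * (a1^2 + a1*a2 + a2^2 + (3/2)*(a1+a2) + 9/16) = 0 := by
      linear_combination h1 - h2
    rcases mul_eq_zero.mp h with h' | h'
    · exact absurd h' hne12
    · exact h'
  have E13 : a1^2 + a1*a3 + a3^2 + (3/2)*(a1+a3) + 9/16 = 0 := by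
    have h : (a1 - a3) * (a1^2 + a1*a3 + a3^2 + (3/2)*(a1+a3) + 9/16) = 0 := by
      linear_combination h1 - h3
    rcases mul_eq_zero.mp h with h' | h'
    · exact absurd h' hne13
    · exact h'
  have hsum : a1 + a2 + a3 = -(3/2) := by
    have h : (a2 - a3) * (a1 + a2 + a3 + 3/2) = 0 := by
      linear_combination E12 - E13
    rcases mul_eq_zero.mp h with h' | h'
    · exact absurd h' hne23
    · linarith [h']
  have ha12 : a1 * a2 = (a3 + 3/4)^2 := by
    linear_combination (-1) * E12 + (a1 + a2 - a3) * hsum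
  set x := Real.sqrt (-a1) with hx
  set y := Real.sqrt (-a2) with hy
  set z := Real.sqrt (-a3) with hz
  have hx2 : x^2 = -a1 := Real.sq_sqrt (by linarith)
  have hy2 : y^2 = -a2 := Real.sq_sqrt (by linarith)
  have hz2 : z^2 = -a3 := Real.sq_sqrt (by linarith)
  have hxnn : 0 ≤ x := Real.sqrt_nonneg _
  have hynn : 0 ≤ y := Real.sqrt_nonneg _
  have hznn : 0 ≤ z := Real.sqrt_nonneg _
  have hxy : x * y = a3 + 3/4 := by
    have h1' : (x*y)^2 = (a3 + 3/4)^2 := by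
      rw [mul_pow, hx2, hy2]; linear_combination ha12
    have h3' : (x*y - (a3 + 3/4)) * (x*y + (a3 + 3/4)) = 0 := by linear_combination h1'
    rcases mul_eq_zero.mp h3' with h' | h'
    · linarith [h']
    · nlinarith [mul_nonneg hxnn hynn]
  -- square the relation
  have hsq : x^2 + 2*(x*y) + y^2 = 1 + 2*z + z^2 := by
    have h' : (x + y)^2 = (1 + z)^2 := by rw [H]
    linear_combination h'
  have hzval : z = 1 + 2*a3 := by
    linear_combination (-hsq + hx2 + hy2 + 2*hxy - hz2 - hsum)/2
  have hfin : (1 + 2*a3)^2 = -a3 := by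
    linear_combination hz2 - (z + 1 + 2*a3) * hzval
  have p : (0:ℝ) < (4*a3+1)*(a3+1) := mul_pos (by linarith) (by linarith)
  have p0 : (4*a3+1)*(a3+1) = 0 := by linear_combination hfin
  exact absurd p0 (ne_of_gt p)
end

section
/- Let q ∈ (0, 1/4) and let α₁ < α₂ < α₃ be the three real roots of f(t) = t³ + (3/2)t² + (9/16)t + q², satisfying -1 < α₁ < -3/4 < α₂ < -1/4 < α₃ ≤ 0. Then it is impossible that √(-α₁) + √(-α₃) = 1 + √(-α₂). -/
set_option maxHeartbeats 1600000 in
theorem stmt4 (q a1 a2 a3 : ℝ) (hq : 0 < q) (hq4 : q < 1/4)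
    (h1 : a1^3 + (3/2)*a1^2 + (9/16)*a1 + q^2 = 0)
    (h2 : a2^3 + (3/2)*a2^2 + (9/16)*a2 + q^2 = 0)
    (h3 : a3^3 + (3/2)*a3^2 + (9/16)*a3 + q^2 = 0)
    (h12 : a1 < a2) (h23 : a2 < a3)
    (hb1 : -1 < a1) (hb2 : a1 < -(3/4)) (hb3 : -(3/4) < a2) (hb4 : a2 < -(1/4))
    (hb5 : -(1/4) < a3) (hb6 : a3 ≤ 0) :
    ¬ (Real.sqrt (-a1) + Real.sqrt (-a3) = 1 + Real.sqrt (-a2)) := by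
  intro heq
  have hne12 : a1 - a2 ≠ 0 := sub_ne_zero.mpr (ne_of_lt h12)
  have hne23 : a2 - a3 ≠ 0 := sub_ne_zero.mpr (ne_of_lt h23)
  have hne13 : a1 - a3 ≠ 0 := sub_ne_zero.mpr (ne_of_lt (h12.trans h23))
  have e12 : a1^2 + a1*a2 + a2^2 + (3/2)*(a1+a2) + 9/16 = 0 := by
    have h : (a1 - a2) * (a1^2 + a1*a2 + a2^2 + (3/2)*(a1+a2) + 9/16) = 0 := by
      linear_combination h1 - h2
    rcases mul_eq_zero.mp h with h' | h'
    · exact absurd h' hne12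
    · exact h'
  have e23 : a2^2 + a2*a3 + a3^2 + (3/2)*(a2+a3) + 9/16 = 0 := by
    have h : (a2 - a3) * (a2^2 + a2*a3 + a3^2 + (3/2)*(a2+a3) + 9/16) = 0 := by
      linear_combination h2 - h3
    rcases mul_eq_zero.mp h with h' | h'
    · exact absurd h' hne23
    · exact h'
  have hsum : a1 + a2 + a3 = -(3/2) := by
    have h : (a1 - a3) * (a1 + a2 + a3 + 3/2) = 0 := by
      linear_combination e12 - e23
    rcases mul_eq_zero.mp h with h' | h'
    · exact absurd h' hne13
    · linarith
  have hsp : a1*a2 + a1*a3 + a2*a3 = 9/16 := by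
    linear_combination -e12 + (a1 + a2) * hsum
  have hprod : a1*a2*a3 = -q^2 := by
    linear_combination h2 + a2*hsp - a2^2*hsum
  set x := Real.sqrt (-a1) with hxdef
  set y := Real.sqrt (-a3) with hydef
  set z := Real.sqrt (-a2) with hzdef
  have hx2 : x^2 = -a1 := Real.sq_sqrt (by linarith)
  have hy2 : y^2 = -a3 := Real.sq_sqrt (by linarith)
  have hz2 : z^2 = -a2 := Real.sq_sqrt (by linarith)
  have hx0 : 0 ≤ x := Real.sqrt_nonneg _
  have hy0 : 0 ≤ y := Real.sqrt_nonneg _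
  have hz0 : 0 ≤ z := Real.sqrt_nonneg _
  have hzgt : (1/2 : ℝ) < z := by
    rw [hzdef, show ((1:ℝ)/2) = Real.sqrt (1/4) by
      rw [show ((1:ℝ)/4) = (1/2)^2 by norm_num, Real.sqrt_sq (by norm_num)]]
    exact Real.sqrt_lt_sqrt (by norm_num) (by linarith)
  -- 2xy = 2z^2 + 2z - 1/2
  have hxy : 2*x*y = 2*z^2 + 2*z - 1/2 := by
    have hsq : (x + y)^2 = (1 + z)^2 := by rw [heq]
    nlinarith [hx2, hy2, hz2, hsum]
  -- (xyz)^2 = q^2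
  have hxyz2 : (x*y*z)^2 = q^2 := by
    have h' : (x*y*z)^2 = x^2 * y^2 * z^2 := by ring
    rw [h', hx2, hy2, hz2]
    linear_combination -hprod
  have hxyz : x*y*z = q := by
    have h0 : 0 ≤ x*y*z := by positivity
    have hf : (x*y*z - q)*(x*y*z + q) = 0 := by linear_combination hxyz2
    rcases mul_eq_zero.mp hf with h' | h'
    · linarith
    · linarith
  -- multiply hxy by z : 2q = 2z^3 + 2z^2 - z/2
  have hqz : 2*q = 2*z^3 + 2*z^2 - z/2 := by
    linear_combination z*hxy - 2*hxyz
  -- a2 = -z^2 is a root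
  have hroot : -z^6 + (3/2)*z^4 - (9/16)*z^2 + q^2 = 0 := by
    have : a2 = -z^2 := by linarith [hz2]
    rw [this] at h2; linear_combination h2
  -- substitute q to get contradiction
  have hfinal : z^2 * (4*z^3 + 4*z^2 - z - 1) = 0 := by
    linear_combination 2*hroot - (z^3 + z^2 - z/4 + q)*hqz
  have hpos : z^2 * (4*z^3 + 4*z^2 - z - 1) > 0 := by
    have h1 : 4*z^3 + 4*z^2 - z - 1 > 0 := by nlinarith [hzgt]
    have h2 : z^2 > 0 := by positivity
    positivity
  linarith [hfinal, hpos]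
end

section
/- Let V be a finite-dimensional real inner product space, S a symmetric endomorphism, J a skew-symmetric injective endomorphism, and λ, H, C real numbers with S² - HS - (C + 1/4)·id = 0 and λ² - Hλ - (C+1) = 0. Suppose J + 4SJS - 2λ(JS + SJ) = 0 and SJ = JS. If S is not a scalar multiple of the identity, then C = -1/2 and λ = H, which contradicts λ² - Hλ - (C+1) = 0; hence no such data exist with S not a scalar multiple of the identity. -/
open scoped RealInnerProductSpace

theorem stmt10 {V : Type*} [NormedAddCommGroup V] [InnerProductSpace ℝ V]
    [FiniteDimensional ℝ V]
    (S J : V →ₗ[ℝ] V)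
    (hSsym : ∀ x y : V, ⟪S x, y⟫ = ⟪x, S y⟫)
    (hJskew : ∀ x y : V, ⟪J x, y⟫ = -⟪x, J y⟫)
    (hJinj : Function.Injective J)
    (lam H C : ℝ)
    (hS2 : S ∘ₗ S - H • S - (C + 1/4) • LinearMap.id = 0)
    (hlam : lam^2 - H * lam - (C + 1) = 0)
    (heq : J + (4 : ℝ) • (S ∘ₗ J ∘ₗ S) - (2 * lam) • (J ∘ₗ S + S ∘ₗ J) = 0)
    (hcomm : S ∘ₗ J = J ∘ₗ S)
    (hnotscalar : ¬ ∃ c : ℝ, S = c • LinearMap.id) :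
    C = -(1/2) ∧ lam = H ∧ False := by
  have key : ∀ x : V, (2 + 4*C) • x + (4*(H - lam)) • S x = 0 := by
    intro x
    have hS2x : S (S x) = H • S x + (C + 1/4) • x := by
      have h := congrFun (congrArg DFunLike.coe hS2) x
      simp only [LinearMap.sub_apply, LinearMap.smul_apply, LinearMap.comp_apply,
        LinearMap.id_apply, LinearMap.zero_apply, sub_eq_zero] at h
      linear_combination (norm := module) h
    have hcx : S (J x) = J (S x) := congrFun (congrArg DFunLike.coe hcomm) x
    have h1 : S (J (S x)) = J (S (S x)) := congrFun (congrArg DFunLike.coe hcomm) (S x)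
    have hx := congrFun (congrArg DFunLike.coe heq) x
    simp only [LinearMap.add_apply, LinearMap.sub_apply, LinearMap.smul_apply,
      LinearMap.comp_apply, LinearMap.zero_apply, hcx, h1, hS2x, map_add, map_smul] at hx
    have hJ0 : J ((2 + 4*C) • x + (4*(H - lam)) • S x) = 0 := by
      simp only [map_add, map_smul]
      linear_combination (norm := module) hx
    have h2 : J ((2 + 4*C) • x + (4*(H - lam)) • S x) = J 0 := by simpa using hJ0
    simpa using hJinj h2
  obtain ⟨x0, hx0⟩ : ∃ x : V, x ≠ 0 := by
    by_contra h
    push_neg at h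
    exact hnotscalar ⟨0, by ext x; simp [h x]⟩
  have hlH : lam = H := by
    by_contra hne
    apply hnotscalar
    have h4 : (4*(H - lam)) ≠ 0 := by
      intro h; apply hne; nlinarith [h]
    refine ⟨-(2 + 4*C) / (4*(H - lam)), ?_⟩
    ext x
    have hkx := key x
    have : (4*(H - lam)) • S x = (-(2 + 4*C)) • x := by
      linear_combination (norm := module) hkx
    have := congrArg (fun v => (4*(H - lam))⁻¹ • v) this
    simp only [smul_smul, inv_mul_cancel₀ h4, one_smul] at this
    simp only [LinearMap.smul_apply, LinearMap.id_apply, this, smul_smul]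
    congr 1
    field_simp
  have hC : C = -(1/2) := by
    have hk := key x0
    rw [hlH] at hk
    simp only [sub_self, mul_zero, zero_smul, add_zero] at hk
    rcases smul_eq_zero.mp hk with h | h
    · linarith
    · exact absurd h hx0
  refine ⟨hC, hlH, ?_⟩
  rw [hlH, hC] at hlam
  nlinarith [hlam]
end

section
/- Let V be a finite-dimensional real inner product space, S a symmetric endomorphism, J a skew-symmetric endomorphism not commuting with S, and λ, H, C real numbers. If J + 4SJS - 2λ(JS + SJ) = 0 and S² - HS - (C + 1/4)·id = 0, then Hλ + 2C = 0. -/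
open scoped RealInnerProductSpace

theorem stmt11 {V : Type*} [NormedAddCommGroup V] [InnerProductSpace ℝ V]
    [FiniteDimensional ℝ V]
    (S J : V →ₗ[ℝ] V)
    (hSsym : ∀ x y : V, ⟪S x, y⟫ = ⟪x, S y⟫)
    (hJskew : ∀ x y : V, ⟪J x, y⟫ = -⟪x, J y⟫)
    (hcomm : S ∘ₗ J ≠ J ∘ₗ S)
    (lam H C : ℝ)
    (heq : J + (4 : ℝ) • (S ∘ₗ J ∘ₗ S) - (2 * lam) • (J ∘ₗ S + S ∘ₗ J) = 0)
    (hS2 : S ∘ₗ S - H • S - (C + 1/4) • LinearMap.id = 0) :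
    H * lam + 2 * C = 0 := by
  have e1 : ∀ x : V, J x + (4 : ℝ) • S (J (S x))
      - (2 * lam) • (J (S x) + S (J x)) = 0 := by
    intro x
    have := LinearMap.ext_iff.mp heq x
    simpa using this
  have e2 : ∀ x : V, S (S x) = H • S x + (C + 1/4) • x := by
    intro x
    have := LinearMap.ext_iff.mp hS2 x
    simpa [sub_eq_zero, sub_eq_iff_eq_add'] using this
  have key : (H * lam + 2 * C) • (S ∘ₗ J - J ∘ₗ S) = 0 := by
    ext x
    have A : S (J x) + (4 : ℝ) • S (S (J (S x)))
        - (2 * lam) • (S (J (S x)) + S (S (J x))) = 0 := by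
      have := congrArg S (e1 x)
      simpa [map_add, map_sub, map_smul] using this
    have B := e1 (S x)
    rw [e2 (J (S x)), e2 (J x)] at A
    rw [e2 x] at B
    simp only [map_add, map_smul] at B
    simp only [LinearMap.zero_apply, LinearMap.smul_apply, LinearMap.sub_apply,
      LinearMap.comp_apply]
    linear_combination (norm := module) (-(1:ℝ)/2) • A - (-(1:ℝ)/2) • B
  rcases smul_eq_zero.mp key with h | h
  · exact h
  · exact absurd (sub_eq_zero.mp h) hcomm
end

section
/- Let n = v ⊕ z be a generalized Heisenberg algebra and let V ∈ v, Y ∈ z be nonzero. Define K = K_{V,Y} on z ∩ Y^⊥ by K X = ‖V‖⁻²‖Y‖⁻¹ [V, J_X J_Y V]. Then K is skew-symmetric with respect to the inner product on z ∩ Y^⊥, and every eigenvalue of K² lies in the interval [-1, 0]. -/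
open scoped RealInnerProductSpace

theorem stmt17 {v z : Type*} [NormedAddCommGroup v] [InnerProductSpace ℝ v]
    [NormedAddCommGroup z] [InnerProductSpace ℝ z]
    (br : v →ₗ[ℝ] v →ₗ[ℝ] z)
    (halt : ∀ U : v, br U U = 0)
    (J : z → v →ₗ[ℝ] v)
    (hJdef : ∀ (Z : z) (U W : v), ⟪J Z U, W⟫ = ⟪br U W, Z⟫)
    (hCl : ∀ Z : z, (J Z) ∘ₗ (J Z) = -(‖Z‖^2 : ℝ) • LinearMap.id)
    (V : v) (Y : z) (hV : V ≠ 0) (hY : Y ≠ 0)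
    (K : z → z)
    (hK : ∀ X : z, K X = ((‖V‖^2)⁻¹ * ‖Y‖⁻¹) • br V (J X (J Y V))) :
    (∀ X : z, ⟪X, Y⟫ = 0 → ⟪K X, Y⟫ = 0) ∧
    (∀ X X' : z, ⟪X, Y⟫ = 0 → ⟪X', Y⟫ = 0 → ⟪K X, X'⟫ = -⟪X, K X'⟫) ∧
    (∀ (X : z) (c : ℝ), ⟪X, Y⟫ = 0 → X ≠ 0 → K (K X) = c • X → -1 ≤ c ∧ c ≤ 0) := by
  set c : ℝ := (‖V‖^2)⁻¹ * ‖Y‖⁻¹ with hc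
  have hVn : (0:ℝ) < ‖V‖ := norm_pos_iff.mpr hV
  have hYn : (0:ℝ) < ‖Y‖ := norm_pos_iff.mpr hY
  have hc0 : (0:ℝ) < c := by rw [hc]; positivity
  have hbr : ∀ U W : v, br U W = - br W U := by
    intro U W
    have h := halt (U + W)
    simp only [map_add, LinearMap.add_apply, halt, add_zero, zero_add] at h
    exact eq_neg_of_add_eq_zero_left (by linear_combination (norm := module) h)
  have hskew : ∀ (Z : z) (U W : v), ⟪J Z U, W⟫ = -⟪U, J Z W⟫ := by
    intro Z U W
    rw [hJdef, hbr U W, inner_neg_left, ← hJdef, real_inner_comm]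
  have hdiag : ∀ (Z : z) (U : v), ⟪U, J Z U⟫ = 0 := by
    intro Z U
    have h := hskew Z U U
    rw [real_inner_comm] at h
    linarith
  have hJadd : ∀ (Z Z' : z) (U : v), J (Z + Z') U = J Z U + J Z' U := by
    intro Z Z' U
    apply ext_inner_right ℝ
    intro W
    rw [hJdef, inner_add_right, inner_add_left, hJdef, hJdef]
  have hClApp : ∀ (Z : z) (U : v), J Z (J Z U) = -(‖Z‖^2 : ℝ) • U := by
    intro Z U
    have h := LinearMap.congr_fun (hCl Z) U
    simpa using h
  have hanti : ∀ (Z Z' : z) (U : v),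
      J Z (J Z' U) + J Z' (J Z U) = (-(2*⟪Z,Z'⟫)) • U := by
    intro Z Z' U
    have h := hClApp (Z + Z') U
    simp only [hJadd, map_add] at h
    rw [hClApp, hClApp, norm_add_sq_real] at h
    have h2 : J Z (J Z' U) + J Z' (J Z U)
        = -(‖Z‖^2 + 2*⟪Z,Z'⟫ + ‖Z'‖^2 : ℝ) • U
          - (-(‖Z‖^2 : ℝ) • U) - (-(‖Z'‖^2 : ℝ) • U) := by
      rw [← h]; abel
    rw [h2]
    rw [neg_smul, neg_smul, neg_smul, neg_smul]
    rw [add_smul, add_smul]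
    abel
  have hnormsq : ∀ (Z : z) (U : v), ⟪J Z U, J Z U⟫ = ‖Z‖^2 * ‖U‖^2 := by
    intro Z U
    rw [hskew, hClApp, real_inner_smul_right, real_inner_self_eq_norm_sq]
    ring
  have hnorm : ∀ (Z : z) (U : v), ‖J Z U‖ = ‖Z‖ * ‖U‖ := by
    intro Z U
    have h := hnormsq Z U
    rw [real_inner_self_eq_norm_sq] at h
    have h' : ‖J Z U‖^2 = (‖Z‖ * ‖U‖)^2 := by rw [h]; ring
    calc ‖J Z U‖ = Real.sqrt (‖J Z U‖^2) := (Real.sqrt_sq (norm_nonneg _)).symm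
      _ = Real.sqrt ((‖Z‖ * ‖U‖)^2) := by rw [h']
      _ = ‖Z‖ * ‖U‖ := Real.sqrt_sq (by positivity)
  have hKinner : ∀ X X' : z, ⟪K X, X'⟫ = c * ⟪J X' V, J X (J Y V)⟫ := by
    intro X X'
    rw [hK, real_inner_smul_left, hJdef]
  have skew : ∀ X X' : z, ⟪K X, X'⟫ = -⟪X, K X'⟫ := by
    intro X X'
    have e1 : ⟪K X, X'⟫ = -(c * ⟪V, J X' (J X (J Y V))⟫) := by
      rw [hKinner, hskew]; ring
    have e2 : ⟪X, K X'⟫ = -(c * ⟪V, J X (J X' (J Y V))⟫) := by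
      rw [real_inner_comm, hKinner, hskew]; ring
    have e3 := hanti X' X (J Y V)
    have e4 : ⟪V, J X' (J X (J Y V))⟫ + ⟪V, J X (J X' (J Y V))⟫ = 0 := by
      rw [← inner_add_right, e3, real_inner_smul_right, hdiag Y V]; ring
    rw [e1, e2]
    linear_combination (-c) * e4
  have part1 : ∀ X : z, ⟪K X, Y⟫ = 0 := by
    intro X
    rw [hKinner, hdiag X (J Y V), mul_zero]
  refine ⟨fun X _ => part1 X, fun X X' _ _ => skew X X', ?_⟩
  intro X c' hXY hX0 heig
  have hXn : (0:ℝ) < ‖X‖ := norm_pos_iff.mpr hX0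
  have h1 : c' * ‖X‖^2 = -‖K X‖^2 := by
    have h := skew (K X) X
    rw [heig, real_inner_smul_left, real_inner_self_eq_norm_sq,
      real_inner_self_eq_norm_sq] at h
    exact h
  have h2 : ‖K X‖^2 ≤ ‖K X‖ * ‖X‖ := by
    have e := hKinner X (K X)
    have hcs := real_inner_le_norm (J (K X) V) (J X (J Y V))
    simp only [hnorm] at hcs
    have key : ⟪K X, K X⟫ ≤ ‖K X‖ * ‖X‖ := by
      rw [e]
      calc c * ⟪J (K X) V, J X (J Y V)⟫
          ≤ c * ((‖K X‖ * ‖V‖) * (‖X‖ * (‖Y‖ * ‖V‖))) :=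
            mul_le_mul_of_nonneg_left hcs hc0.le
        _ = ‖K X‖ * ‖X‖ := by rw [hc]; field_simp
    rw [real_inner_self_eq_norm_sq] at key
    exact key
  have hKle : ‖K X‖ ≤ ‖X‖ := by
    nlinarith [h2, norm_nonneg (K X), norm_nonneg X]
  constructor
  · nlinarith [h1, mul_self_le_mul_self (norm_nonneg (K X)) hKle, pow_pos hXn 2]
  · nlinarith [h1, sq_nonneg ‖K X‖, pow_pos hXn 2]
end

section
/- Let n = v ⊕ z be a generalized Heisenberg algebra, V ∈ v and Y ∈ z nonzero, and K = K_{V,Y} the operator on z ∩ Y^⊥ defined by K X = ‖V‖⁻²‖Y‖⁻¹[V, J_X J_Y V]. For X ∈ z ∩ Y^⊥: K²X = -X if and only if J_X J_Y V = ‖Y‖ J_{KX} V. -/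
/-!
Put `W = J_X J_Y V` and `P = ‖Y‖ J_{KX} V`. Unwinding the definition of `K` shows
`⟪P, J_Z V⟫ = ⟪W, J_Z V⟫` for every `Z`, i.e. `P` is the orthogonal projection of `W` onto
`J_z V`. Since `Z ↦ J_Z V` scales norms by `‖V‖`, Pythagoras gives
`‖W - P‖² = ‖Y‖²‖V‖²(‖X‖² - ‖KX‖²)`. Hence `K` is a contraction, and `W = P` exactly when
`‖KX‖ = ‖X‖`. If `K²X = -X`, then `‖X‖ = ‖K²X‖ ≤ ‖KX‖ ≤ ‖X‖`. Conversely, if `W = P`, then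
`KX ⊥ Y`, and the anticommutation relation `J_Z J_{Z'} + J_{Z'} J_Z = -2⟪Z, Z'⟫` gives
`J_{KX} J_Y V = -‖Y‖ J_X V`, which unwinds to `K²X = -X`.
-/

open scoped RealInnerProductSpace

structure HeisenbergType {v z : Type*} [NormedAddCommGroup v] [InnerProductSpace ℝ v]
    [NormedAddCommGroup z] [InnerProductSpace ℝ z]
    (br : v →ₗ[ℝ] v →ₗ[ℝ] z) (J : z → v →ₗ[ℝ] v) : Prop where
  bracket_self : ∀ U : v, br U U = 0
  inner_J_apply : ∀ (Z : z) (U W : v), ⟪J Z U, W⟫ = ⟪br U W, Z⟫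
  J_comp_self : ∀ Z : z, J Z ∘ₗ J Z = -(‖Z‖ ^ 2 : ℝ) • LinearMap.id

namespace HeisenbergType

variable {v z : Type*} [NormedAddCommGroup v] [InnerProductSpace ℝ v]
  [NormedAddCommGroup z] [InnerProductSpace ℝ z]
  {br : v →ₗ[ℝ] v →ₗ[ℝ] z} {J : z → v →ₗ[ℝ] v}

theorem bracket_swap (h : HeisenbergType br J) (U W : v) : br W U = -br U W := by
  have hUW := h.bracket_self (U + W)
  simp only [map_add, LinearMap.add_apply, h.bracket_self, zero_add, add_zero] at hUW
  exact eq_neg_of_add_eq_zero_left hUW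

theorem inner_J_right (h : HeisenbergType br J) (Z : z) (U W : v) :
    ⟪U, J Z W⟫ = -⟪J Z U, W⟫ := by
  rw [h.inner_J_apply, ← real_inner_comm U, h.inner_J_apply, h.bracket_swap, inner_neg_left]

theorem inner_self_J (h : HeisenbergType br J) (Z : z) (U : v) : ⟪U, J Z U⟫ = 0 := by
  have := h.inner_J_right Z U U
  rw [real_inner_comm U (J Z U)] at this
  linarith

theorem J_add_apply (h : HeisenbergType br J) (Z Z' : z) (U : v) :
    J (Z + Z') U = J Z U + J Z' U :=
  ext_inner_right ℝ fun W => by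
    rw [inner_add_left, h.inner_J_apply, h.inner_J_apply, h.inner_J_apply, inner_add_right]

theorem J_J_self (h : HeisenbergType br J) (Z : z) (U : v) :
    J Z (J Z U) = -(‖Z‖ ^ 2 • U) := by
  simpa using LinearMap.congr_fun (h.J_comp_self Z) U

theorem J_J_add_J_J (h : HeisenbergType br J) (Z Z' : z) (U : v) :
    J Z (J Z' U) + J Z' (J Z U) = -((2 * ⟪Z, Z'⟫) • U) := by
  have hsum := h.J_J_self (Z + Z') U
  rw [h.J_add_apply, h.J_add_apply, map_add, map_add, h.J_J_self, h.J_J_self,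
    norm_add_sq_real] at hsum
  linear_combination (norm := module) hsum

theorem inner_J_J (h : HeisenbergType br J) (Z Z' : z) (U : v) :
    ⟪J Z U, J Z' U⟫ = ⟪Z, Z'⟫ * ‖U‖ ^ 2 := by
  have hsum := congrArg (⟪U, ·⟫) (h.J_J_add_J_J Z Z' U)
  simp only [inner_add_right, inner_neg_right, real_inner_smul_right,
    real_inner_self_eq_norm_sq] at hsum
  rw [h.inner_J_right Z U, h.inner_J_right Z' U, real_inner_comm (J Z U)] at hsum
  linarith

theorem norm_J (h : HeisenbergType br J) (Z : z) (U : v) : ‖J Z U‖ = ‖Z‖ * ‖U‖ := by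
  have hsq := h.inner_J_J Z Z U
  rw [real_inner_self_eq_norm_sq, real_inner_self_eq_norm_sq, ← mul_pow] at hsq
  exact (pow_left_inj₀ (norm_nonneg _) (by positivity) two_ne_zero).mp hsq

end HeisenbergType

section KOperator

variable {v z : Type*} [NormedAddCommGroup v] [InnerProductSpace ℝ v]
  [NormedAddCommGroup z] [InnerProductSpace ℝ z]

noncomputable def kOperator (br : v →ₗ[ℝ] v →ₗ[ℝ] z) (J : z → v →ₗ[ℝ] v) (V : v) (Y : z)
    (X : z) : z :=
  ((‖V‖ ^ 2)⁻¹ * ‖Y‖⁻¹) • br V (J X (J Y V))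

variable {br : v →ₗ[ℝ] v →ₗ[ℝ] z} {J : z → v →ₗ[ℝ] v} {V : v} {Y : z}

theorem inner_kOperator (h : HeisenbergType br J) (X Z : z) :
    ⟪kOperator br J V Y X, Z⟫ = (‖V‖ ^ 2)⁻¹ * ‖Y‖⁻¹ * ⟪J Z V, J X (J Y V)⟫ := by
  rw [kOperator, real_inner_smul_left, h.inner_J_apply]

theorem inner_kOperator_self_right (h : HeisenbergType br J) (X : z) :
    ⟪kOperator br J V Y X, Y⟫ = 0 := by
  rw [inner_kOperator h, h.inner_self_J, mul_zero]

theorem inner_smul_J_kOperator (h : HeisenbergType br J) (hV : V ≠ 0) (hY : Y ≠ 0)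
    (X Z : z) :
    ⟪‖Y‖ • J (kOperator br J V Y X) V, J Z V⟫ = ⟪J X (J Y V), J Z V⟫ := by
  have hV' : ‖V‖ ≠ 0 := norm_ne_zero_iff.mpr hV
  have hY' : ‖Y‖ ≠ 0 := norm_ne_zero_iff.mpr hY
  rw [real_inner_smul_left, h.inner_J_J, inner_kOperator h, real_inner_comm (J Z V)]
  field_simp

theorem norm_sub_smul_J_kOperator_sq (h : HeisenbergType br J) (hV : V ≠ 0) (hY : Y ≠ 0)
    (X : z) :
    ‖J X (J Y V) - ‖Y‖ • J (kOperator br J V Y X) V‖ ^ 2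
      = (‖Y‖ * ‖V‖) ^ 2 * (‖X‖ ^ 2 - ‖kOperator br J V Y X‖ ^ 2) := by
  set P := ‖Y‖ • J (kOperator br J V Y X) V
  have hperp : ⟪J X (J Y V) - P, P⟫ = 0 := by
    rw [real_inner_smul_right, inner_sub_left, inner_smul_J_kOperator h hV hY, sub_self,
      mul_zero]
  have hpyth := norm_add_sq_eq_norm_sq_add_norm_sq_real hperp
  rw [sub_add_cancel, norm_smul, norm_norm, h.norm_J, h.norm_J, h.norm_J] at hpyth
  linear_combination -hpyth

theorem norm_kOperator_le (h : HeisenbergType br J) (hV : V ≠ 0) (hY : Y ≠ 0) (X : z) :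
    ‖kOperator br J V Y X‖ ≤ ‖X‖ := by
  have hpos : 0 < (‖Y‖ * ‖V‖) ^ 2 := by positivity
  have hsq : ‖kOperator br J V Y X‖ ^ 2 ≤ ‖X‖ ^ 2 := by
    nlinarith [norm_sub_smul_J_kOperator_sq h hV hY X,
      sq_nonneg ‖J X (J Y V) - ‖Y‖ • J (kOperator br J V Y X) V‖]
  exact (pow_le_pow_iff_left₀ (norm_nonneg _) (norm_nonneg _) two_ne_zero).mp hsq

theorem J_J_eq_smul_J_kOperator_iff (h : HeisenbergType br J) (hV : V ≠ 0) (hY : Y ≠ 0)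
    (X : z) :
    J X (J Y V) = ‖Y‖ • J (kOperator br J V Y X) V ↔ ‖kOperator br J V Y X‖ = ‖X‖ := by
  have hpos : (‖Y‖ * ‖V‖) ^ 2 ≠ 0 := by positivity
  rw [← sub_eq_zero, ← norm_eq_zero, ← sq_eq_zero_iff (M₀ := ℝ),
    norm_sub_smul_J_kOperator_sq h hV hY, mul_eq_zero, or_iff_right hpos, sub_eq_zero,
    eq_comm, pow_left_inj₀ (norm_nonneg _) (norm_nonneg _) two_ne_zero]

theorem norm_kOperator_eq_of_kOperator_kOperator (h : HeisenbergType br J) (hV : V ≠ 0)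
    (hY : Y ≠ 0) {X : z} (hX : kOperator br J V Y (kOperator br J V Y X) = -X) :
    ‖kOperator br J V Y X‖ = ‖X‖ :=
  le_antisymm (norm_kOperator_le h hV hY X)
    (calc ‖X‖ = ‖kOperator br J V Y (kOperator br J V Y X)‖ := by rw [hX, norm_neg]
      _ ≤ ‖kOperator br J V Y X‖ := norm_kOperator_le h hV hY _)

theorem kOperator_kOperator_of_J_J_eq (h : HeisenbergType br J) (hV : V ≠ 0) (hY : Y ≠ 0)
    {X : z} (hXY : ⟪X, Y⟫ = 0) (hX : J X (J Y V) = ‖Y‖ • J (kOperator br J V Y X) V) :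
    kOperator br J V Y (kOperator br J V Y X) = -X := by
  have hV' : ‖V‖ ≠ 0 := norm_ne_zero_iff.mpr hV
  have hY' : ‖Y‖ ≠ 0 := norm_ne_zero_iff.mpr hY
  set KX := kOperator br J V Y X
  have hJKX : J KX V = ‖Y‖⁻¹ • J X (J Y V) := by
    rw [hX, smul_smul, inv_mul_cancel₀ hY', one_smul]
  have hJYJX : J Y (J X (J Y V)) = ‖Y‖ ^ 2 • J X V := by
    have hanti := h.J_J_add_J_J Y X (J Y V)
    rw [h.J_J_self, map_neg, map_smul, real_inner_comm X Y, hXY] at hanti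
    linear_combination (norm := module) hanti
  have hJKXJY : J KX (J Y V) = -(‖Y‖ • J X V) := by
    have hanti := h.J_J_add_J_J KX Y V
    have hcoeff : ‖Y‖⁻¹ * ‖Y‖ ^ 2 = ‖Y‖ := by field_simp
    rw [inner_kOperator_self_right h, hJKX, map_smul, hJYJX, smul_smul, hcoeff] at hanti
    linear_combination (norm := module) hanti
  refine ext_inner_right ℝ fun Z => ?_
  rw [inner_kOperator h, hJKXJY, inner_neg_right, real_inner_smul_right, h.inner_J_J,
    inner_neg_left, real_inner_comm X Z]
  field_simp

end KOperator

theorem stmt18 {v z : Type*} [NormedAddCommGroup v] [InnerProductSpace ℝ v]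
    [NormedAddCommGroup z] [InnerProductSpace ℝ z]
    (br : v →ₗ[ℝ] v →ₗ[ℝ] z)
    (halt : ∀ U : v, br U U = 0)
    (J : z → v →ₗ[ℝ] v)
    (hJdef : ∀ (Z : z) (U W : v), ⟪J Z U, W⟫ = ⟪br U W, Z⟫)
    (hCl : ∀ Z : z, (J Z) ∘ₗ (J Z) = -(‖Z‖^2 : ℝ) • LinearMap.id)
    (V : v) (Y : z) (hV : V ≠ 0) (hY : Y ≠ 0)
    (K : z → z)
    (hK : ∀ X : z, K X = ((‖V‖^2)⁻¹ * ‖Y‖⁻¹) • br V (J X (J Y V)))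
    (X : z) (hXY : ⟪X, Y⟫ = 0) :
    K (K X) = -X ↔ J X (J Y V) = ‖Y‖ • J (K X) V := by
  have h : HeisenbergType br J := ⟨halt, hJdef, hCl⟩
  obtain rfl : K = kOperator br J V Y := funext hK
  exact ⟨fun hKK => (J_J_eq_smul_J_kOperator_iff h hV hY X).mpr
      (norm_kOperator_eq_of_kOperator_kOperator h hV hY hKK),
    kOperator_kOperator_of_J_J_eq h hV hY hXY⟩
end
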